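/- arXiv:2301.00586 — 3 statements merged into one kernel-verified Lean document; each statement's English description precedes it below -/
import Mathlib

section
/- For every z ∈ ℂ, neither 𝔭_z nor 𝔮_z belongs to D(T). -/
open Filter Topology MeasureTheory

noncomputable section

/-- Action of the Jacobi matrix `J` on a complex sequence:
`(Jc)ₙ = aₙ₋₁cₙ₋₁ + bₙcₙ + aₙcₙ₊₁` with `a₋₁ := 0`. -/
def jacobiMul (a b : ℕ → ℝ) (c : ℕ → ℂ) : ℕ → ℂ
  | 0 => (b 0 : ℂ) * c 0 + (a 0 : ℂ) * c 1
  | n + 1 => (a n : ℂ) * c n + (b (n + 1) : ℂ) * c (n + 1) + (a (n + 1) : ℂ) * c (n + 2)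

/-- `jacobiGraph a b f g` means: `f` belongs to the domain `D(T)` of the closure `T` of the
Jacobi matrix acting on the finitely supported sequences, and `T f = g`; i.e. there are
finitely supported sequences `u k → f` in `ℓ²` such that `J (u k) → g` in `ℓ²`. -/
def jacobiGraph (a b : ℕ → ℝ) (f g : ℕ → ℂ) : Prop :=
  ∃ u : ℕ → ℕ → ℂ,
    (∀ k, (Function.support (u k)).Finite) ∧
    (∀ k, Summable fun n => ‖u k n - f n‖ ^ 2) ∧
    Tendsto (fun k => ∑' n, ‖u k n - f n‖ ^ 2) atTop (𝓝 0) ∧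
    (∀ k, Summable fun n => ‖jacobiMul a b (u k) n - g n‖ ^ 2) ∧
    Tendsto (fun k => ∑' n, ‖jacobiMul a b (u k) n - g n‖ ^ 2) atTop (𝓝 0)

/-- Membership in the domain `D(T)` of the Jacobi operator. -/
def inDomT (a b : ℕ → ℝ) (f : ℕ → ℂ) : Prop := ∃ g, jacobiGraph a b f g

/-- The `ℓ²` norm of a complex sequence. -/
def l2norm (f : ℕ → ℂ) : ℝ := Real.sqrt (∑' n, ‖f n‖ ^ 2)

/-- The data of an indeterminate Hamburger moment problem: Jacobi parameters `a`, `b`,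
the orthonormal polynomials `p` and second-kind polynomials `q` (as entire functions),
determined by the three-term recurrence, together with the indeterminacy condition
`∑ₙ (|pₙ(z)|² + |qₙ(z)|²) < ∞` for all `z`. -/
structure JacobiSetup where
  a : ℕ → ℝ
  b : ℕ → ℝ
  ha : ∀ n, 0 < a n
  p : ℕ → ℂ → ℂ
  q : ℕ → ℂ → ℂ
  hp0 : ∀ z, p 0 z = 1
  hp1 : ∀ z, p 1 z = (z - (b 0 : ℂ)) / (a 0 : ℂ)
  hq0 : ∀ z, q 0 z = 0
  hq1 : ∀ z, q 1 z = 1 / (a 0 : ℂ)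
  hrecp : ∀ n z, z * p (n + 1) z =
    (a (n + 1) : ℂ) * p (n + 2) z + (b (n + 1) : ℂ) * p (n + 1) z + (a n : ℂ) * p n z
  hrecq : ∀ n z, z * q (n + 1) z =
    (a (n + 1) : ℂ) * q (n + 2) z + (b (n + 1) : ℂ) * q (n + 1) z + (a n : ℂ) * q n z
  indet : ∀ z : ℂ, Summable fun n => ‖p n z‖ ^ 2 + ‖q n z‖ ^ 2

/-- The Nevanlinna function `A(u,v)`. -/
def nevA (S : JacobiSetup) (u v : ℂ) : ℂ := (u - v) * ∑' k, S.q k u * S.q k v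
/-- The Nevanlinna function `B(u,v)`. -/
def nevB (S : JacobiSetup) (u v : ℂ) : ℂ := -1 + (u - v) * ∑' k, S.p k u * S.q k v
/-- The Nevanlinna function `C(u,v)`. -/
def nevC (S : JacobiSetup) (u v : ℂ) : ℂ := 1 + (u - v) * ∑' k, S.q k u * S.p k v
/-- The Nevanlinna function `D(u,v)`. -/
def nevD (S : JacobiSetup) (u v : ℂ) : ℂ := (u - v) * ∑' k, S.p k u * S.p k v

/-!
If `f ∈ D(T)`, then `T f = J f`, and `∑ (J f)ₙ wₙ = ∑ fₙ (J w)ₙ` for every `w ∈ ℓ²` with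
`J w ∈ ℓ²`: for finitely supported `f` this is summation by parts, and it survives the graph
limit by Cauchy–Schwarz. (The pairing is bilinear; this is fine because `a` and `b` are real.)
The recurrences say `J 𝔭_z = z 𝔭_z` and `J 𝔮_z = z 𝔮_z + δ₀`, so pairing `𝔭_z` with `𝔮_z`
the two sides differ by `p₀(z) = 1`.
-/

open Finset

section SquareSummable

variable {ι R : Type*} [NormedRing R]

lemma summable_sq_norm_add {x y : ι → R} (hx : Summable fun n => ‖x n‖ ^ 2)
    (hy : Summable fun n => ‖y n‖ ^ 2) : Summable fun n => ‖x n + y n‖ ^ 2 := by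
  refine .of_nonneg_of_le (fun n => by positivity) (fun n => ?_) ((hx.add hy).mul_left 2)
  nlinarith [norm_add_le (x n) (y n), norm_nonneg (x n + y n), sq_nonneg (‖x n‖ - ‖y n‖)]

lemma summable_sq_norm_of_sub {x f : ι → R} (hx : Summable fun n => ‖x n‖ ^ 2)
    (hd : Summable fun n => ‖x n - f n‖ ^ 2) : Summable fun n => ‖f n‖ ^ 2 := by
  have hd' : Summable fun n => ‖-(x n - f n)‖ ^ 2 := by simpa only [norm_neg] using hd
  simpa only [← sub_eq_add_neg, sub_sub_cancel] using summable_sq_norm_add hx hd'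

lemma sum_norm_mul_le_sqrt_mul_sqrt {x y : ι → R} (hx : Summable fun n => ‖x n‖ ^ 2)
    (hy : Summable fun n => ‖y n‖ ^ 2) (s : Finset ι) :
    ∑ n ∈ s, ‖x n‖ * ‖y n‖ ≤ √(∑' n, ‖x n‖ ^ 2) * √(∑' n, ‖y n‖ ^ 2) := by
  refine (Real.sum_mul_le_sqrt_mul_sqrt s _ _).trans ?_
  gcongr
  · exact hx.sum_le_tsum s fun _ _ => by positivity
  · exact hy.sum_le_tsum s fun _ _ => by positivity

lemma summable_norm_mul_of_sq {x y : ι → R} (hx : Summable fun n => ‖x n‖ ^ 2)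
    (hy : Summable fun n => ‖y n‖ ^ 2) : Summable fun n => ‖x n‖ * ‖y n‖ :=
  summable_of_sum_le (fun _ => by positivity) (sum_norm_mul_le_sqrt_mul_sqrt hx hy)

lemma summable_mul_of_sq [CompleteSpace R] {x y : ι → R} (hx : Summable fun n => ‖x n‖ ^ 2)
    (hy : Summable fun n => ‖y n‖ ^ 2) : Summable fun n => x n * y n :=
  .of_norm_bounded (summable_norm_mul_of_sq hx hy) fun _ => norm_mul_le _ _

lemma norm_tsum_mul_le_sqrt_mul_sqrt {x y : ι → R} (hx : Summable fun n => ‖x n‖ ^ 2)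
    (hy : Summable fun n => ‖y n‖ ^ 2) :
    ‖∑' n, x n * y n‖ ≤ √(∑' n, ‖x n‖ ^ 2) * √(∑' n, ‖y n‖ ^ 2) :=
  calc ‖∑' n, x n * y n‖ ≤ ∑' n, ‖x n‖ * ‖y n‖ :=
        tsum_of_norm_bounded (summable_norm_mul_of_sq hx hy).hasSum fun _ => norm_mul_le _ _
    _ ≤ _ := (summable_norm_mul_of_sq hx hy).tsum_le_of_sum_le
        (sum_norm_mul_le_sqrt_mul_sqrt hx hy)

variable {α : Type*} {l : Filter α} {x : α → ι → R} {f : ι → R}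

lemma tendsto_apply_of_tendsto_tsum_sq_norm_sub (hs : ∀ k, Summable fun n => ‖x k n - f n‖ ^ 2)
    (ht : Tendsto (fun k => ∑' n, ‖x k n - f n‖ ^ 2) l (𝓝 0)) (n : ι) :
    Tendsto (fun k => x k n) l (𝓝 (f n)) := by
  rw [tendsto_iff_norm_sub_tendsto_zero]
  have hsqrt := ht.sqrt
  rw [Real.sqrt_zero] at hsqrt
  refine squeeze_zero (fun k => norm_nonneg _) (fun k => ?_) hsqrt
  rw [← Real.sqrt_sq (norm_nonneg (x k n - f n))]
  exact Real.sqrt_le_sqrt ((hs k).le_tsum n fun _ _ => by positivity)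

lemma tendsto_tsum_mul_of_tendsto_tsum_sq_norm_sub [CompleteSpace R]
    (hs : ∀ k, Summable fun n => ‖x k n - f n‖ ^ 2)
    (ht : Tendsto (fun k => ∑' n, ‖x k n - f n‖ ^ 2) l (𝓝 0))
    (hf : Summable fun n => ‖f n‖ ^ 2) {y : ι → R} (hy : Summable fun n => ‖y n‖ ^ 2) :
    Tendsto (fun k => ∑' n, x k n * y n) l (𝓝 (∑' n, f n * y n)) := by
  rw [tendsto_iff_norm_sub_tendsto_zero]
  have hbound : ∀ k, ‖∑' n, x k n * y n - ∑' n, f n * y n‖ ≤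
      √(∑' n, ‖x k n - f n‖ ^ 2) * √(∑' n, ‖y n‖ ^ 2) := fun k => by
    have hxy : Summable fun n => x k n * y n := by
      simpa [sub_mul] using (summable_mul_of_sq (hs k) hy).add (summable_mul_of_sq hf hy)
    rw [← hxy.tsum_sub (summable_mul_of_sq hf hy)]
    simpa only [sub_mul] using norm_tsum_mul_le_sqrt_mul_sqrt (hs k) hy
  have hsqrt := ht.sqrt.mul_const √(∑' n, ‖y n‖ ^ 2)
  rw [Real.sqrt_zero, zero_mul] at hsqrt
  exact squeeze_zero (fun k => norm_nonneg _) hbound hsqrt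

end SquareSummable

section JacobiMatrix

variable {a b : ℕ → ℝ}

lemma jacobiMul_eq_zero_of_lt {u : ℕ → ℂ} {M : ℕ} (hu : ∀ n, M ≤ n → u n = 0) {n : ℕ}
    (hn : M < n) : jacobiMul a b u n = 0 := by
  obtain ⟨m, rfl⟩ := Nat.exists_eq_add_one_of_ne_zero (show n ≠ 0 by omega)
  simp [jacobiMul, hu m (by omega), hu (m + 1) (by omega), hu (m + 2) (by omega)]

lemma continuous_jacobiMul_apply (n : ℕ) : Continuous fun c : ℕ → ℂ => jacobiMul a b c n := by
  cases n <;> simp only [jacobiMul] <;> fun_prop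

lemma sum_range_jacobiMul_mul_sub_mul_jacobiMul (u w : ℕ → ℂ) (M : ℕ) :
    ∑ n ∈ range (M + 1), (jacobiMul a b u n * w n - u n * jacobiMul a b w n) =
      a M * (u (M + 1) * w M - u M * w (M + 1)) := by
  induction M with
  | zero => simp only [zero_add, sum_range_one, jacobiMul]; ring
  | succ M ih => rw [sum_range_succ, ih]; simp only [jacobiMul]; ring

lemma tsum_jacobiMul_mul_of_eq_zero_of_le {u : ℕ → ℂ} {M : ℕ} (hu : ∀ n, M ≤ n → u n = 0)
    (w : ℕ → ℂ) : ∑' n, jacobiMul a b u n * w n = ∑' n, u n * jacobiMul a b w n := by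
  have hJu : ∀ n ∉ range (M + 1), jacobiMul a b u n * w n = 0 := fun n hn => by
    rw [jacobiMul_eq_zero_of_lt hu (by simpa using hn), zero_mul]
  have hu' : ∀ n ∉ range (M + 1), u n * jacobiMul a b w n = 0 := fun n hn => by
    rw [hu n (by simp at hn; omega), zero_mul]
  rw [tsum_eq_sum hJu, tsum_eq_sum hu', ← sub_eq_zero, ← sum_sub_distrib,
    sum_range_jacobiMul_mul_sub_mul_jacobiMul, hu M le_rfl, hu (M + 1) (by omega)]
  ring

lemma summable_sq_norm_jacobiMul_of_eq_zero_of_le {u : ℕ → ℂ} {M : ℕ}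
    (hu : ∀ n, M ≤ n → u n = 0) : Summable fun n => ‖jacobiMul a b u n‖ ^ 2 :=
  summable_of_ne_finset_zero (s := range (M + 1)) fun n hn => by
    rw [jacobiMul_eq_zero_of_lt hu (by simpa using hn), norm_zero, zero_pow two_ne_zero]

lemma exists_eq_zero_of_le_of_finite_support {M₀ : Type*} [Zero M₀] {u : ℕ → M₀}
    (hu : (Function.support u).Finite) :
    ∃ M, ∀ n, M ≤ n → u n = 0 := by
  obtain ⟨M, hM⟩ := hu.bddAbove
  exact ⟨M + 1, fun n hn => by_contra fun h => by have := hM h; omega⟩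

variable {f g : ℕ → ℂ}

lemma jacobiGraph.summable_sq_norm (h : jacobiGraph a b f g) :
    (Summable fun n => ‖f n‖ ^ 2) ∧ Summable fun n => ‖g n‖ ^ 2 := by
  obtain ⟨u, hfin, hs, -, hs', -⟩ := h
  obtain ⟨M, hM⟩ := exists_eq_zero_of_le_of_finite_support (hfin 0)
  have hu : Summable fun n => ‖u 0 n‖ ^ 2 := summable_of_ne_finset_zero (s := range M)
    fun n hn => by rw [hM n (by simpa using hn), norm_zero, zero_pow two_ne_zero]
  exact ⟨summable_sq_norm_of_sub hu (hs 0),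
    summable_sq_norm_of_sub (summable_sq_norm_jacobiMul_of_eq_zero_of_le hM) (hs' 0)⟩

lemma jacobiGraph.eq_jacobiMul (h : jacobiGraph a b f g) : g = jacobiMul a b f := by
  obtain ⟨u, -, hs, ht, hs', ht'⟩ := h
  have hu : Tendsto u atTop (𝓝 f) :=
    tendsto_pi_nhds.2 (tendsto_apply_of_tendsto_tsum_sq_norm_sub hs ht)
  funext n
  exact tendsto_nhds_unique (tendsto_apply_of_tendsto_tsum_sq_norm_sub hs' ht' n)
    (((continuous_jacobiMul_apply n).tendsto f).comp hu)

lemma jacobiGraph.tsum_mul_eq (h : jacobiGraph a b f g) {w : ℕ → ℂ}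
    (hw : Summable fun n => ‖w n‖ ^ 2) (hJw : Summable fun n => ‖jacobiMul a b w n‖ ^ 2) :
    ∑' n, g n * w n = ∑' n, f n * jacobiMul a b w n := by
  obtain ⟨hf, hg⟩ := h.summable_sq_norm
  obtain ⟨u, hfin, hs, ht, hs', ht'⟩ := h
  refine tendsto_nhds_unique (tendsto_tsum_mul_of_tendsto_tsum_sq_norm_sub hs' ht' hg hw) ?_
  refine (tendsto_tsum_mul_of_tendsto_tsum_sq_norm_sub hs ht hf hJw).congr fun k => ?_
  obtain ⟨M, hM⟩ := exists_eq_zero_of_le_of_finite_support (hfin k)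
  exact (tsum_jacobiMul_mul_of_eq_zero_of_le hM w).symm

lemma inDomT.tsum_jacobiMul_mul_sub_mul_jacobiMul (hf : inDomT a b f) {w : ℕ → ℂ}
    (hw : Summable fun n => ‖w n‖ ^ 2) (hJw : Summable fun n => ‖jacobiMul a b w n‖ ^ 2) :
    ∑' n, (jacobiMul a b f n * w n - f n * jacobiMul a b w n) = 0 := by
  obtain ⟨g, h⟩ := hf
  obtain ⟨hf, hg⟩ := h.summable_sq_norm
  rw [← h.eq_jacobiMul, (summable_mul_of_sq hg hw).tsum_sub (summable_mul_of_sq hf hJw),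
    h.tsum_mul_eq hw hJw, sub_self]

end JacobiMatrix

namespace JacobiSetup

variable (S : JacobiSetup) (z : ℂ)

lemma summable_sq_norm_p : Summable fun n => ‖S.p n z‖ ^ 2 :=
  .of_nonneg_of_le (fun _ => by positivity) (fun _ => le_add_of_nonneg_right (by positivity))
    (S.indet z)

lemma summable_sq_norm_q : Summable fun n => ‖S.q n z‖ ^ 2 :=
  .of_nonneg_of_le (fun _ => by positivity) (fun _ => le_add_of_nonneg_left (by positivity))
    (S.indet z)

lemma jacobiMul_p : jacobiMul S.a S.b (fun n => S.p n z) = fun n => z * S.p n z := by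
  have ha0 : (S.a 0 : ℂ) ≠ 0 := by exact_mod_cast (S.ha 0).ne'
  funext n
  cases n with
  | zero => simp only [jacobiMul, S.hp0, S.hp1]; field_simp; ring
  | succ n => simp only [jacobiMul]; linear_combination -S.hrecp n z

lemma jacobiMul_q :
    jacobiMul S.a S.b (fun n => S.q n z) = fun n => z * S.q n z + if n = 0 then 1 else 0 := by
  have ha0 : (S.a 0 : ℂ) ≠ 0 := by exact_mod_cast (S.ha 0).ne'
  funext n
  cases n with
  | zero => simp only [jacobiMul, S.hq0, S.hq1]; field_simp; simp
  | succ n =>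
    simp only [jacobiMul, Nat.add_one_ne_zero, if_false, add_zero]
    linear_combination -S.hrecq n z

lemma summable_sq_norm_jacobiMul_p :
    Summable fun n => ‖jacobiMul S.a S.b (fun m => S.p m z) n‖ ^ 2 := by
  simpa [S.jacobiMul_p, mul_pow] using (S.summable_sq_norm_p z).mul_left (‖z‖ ^ 2)

lemma summable_sq_norm_jacobiMul_q :
    Summable fun n => ‖jacobiMul S.a S.b (fun m => S.q m z) n‖ ^ 2 := by
  have hδ : Summable fun n : ℕ => ‖(if n = 0 then 1 else 0 : ℂ)‖ ^ 2 :=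
    summable_of_ne_finset_zero (s := {0}) fun n hn => by simp_all
  have hzq : Summable fun n => ‖z * S.q n z‖ ^ 2 := by
    simpa [mul_pow] using (S.summable_sq_norm_q z).mul_left (‖z‖ ^ 2)
  rw [S.jacobiMul_q]
  exact summable_sq_norm_add hzq hδ

lemma jacobiMul_p_mul_q_sub_p_mul_jacobiMul_q (n : ℕ) :
    jacobiMul S.a S.b (fun m => S.p m z) n * S.q n z -
      S.p n z * jacobiMul S.a S.b (fun m => S.q m z) n = -if n = 0 then 1 else 0 := by
  simp only [S.jacobiMul_p, S.jacobiMul_q]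
  split_ifs with hn
  · rw [hn, S.hp0]; ring
  · ring

end JacobiSetup

/-- For every `z ∈ ℂ`, neither `𝔭_z` nor `𝔮_z` belongs to `D(T)`. -/
theorem stmt0 (S : JacobiSetup) (z : ℂ) :
    ¬ inDomT S.a S.b (fun n => S.p n z) ∧ ¬ inDomT S.a S.b (fun n => S.q n z) := by
  have hδ : ∑' n : ℕ, (if n = 0 then (1 : ℂ) else 0) = 1 := tsum_ite_eq 0 _
  refine ⟨fun hp => ?_, fun hq => ?_⟩
  · have h := hp.tsum_jacobiMul_mul_sub_mul_jacobiMul (S.summable_sq_norm_q z)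
      (S.summable_sq_norm_jacobiMul_q z)
    rw [tsum_congr (S.jacobiMul_p_mul_q_sub_p_mul_jacobiMul_q z), tsum_neg, hδ] at h
    exact one_ne_zero (neg_eq_zero.1 h)
  · have h := hq.tsum_jacobiMul_mul_sub_mul_jacobiMul (S.summable_sq_norm_p z)
      (S.summable_sq_norm_jacobiMul_p z)
    rw [tsum_congr (g := fun n => if n = 0 then 1 else 0) fun n => by
      linear_combination -S.jacobiMul_p_mul_q_sub_p_mul_jacobiMul_q z n, hδ] at h
    exact one_ne_zero h
end
end

section
/- Let u, v ∈ ℂ. There exists α ∈ ℂ such that 𝔭_u + α·𝔭_v ∈ D(T) if and only if D(u,v) = 0, and in the affirmative case α is uniquely determined and equals B(u,v). -/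
/-!
Write `[f, d]_N = a_N (f_{N+1} d_N - f_N d_{N+1})` for the Wronskian of two sequences; Green's
formula identifies it with the `N`-th partial sum of `∑ ((Jf)_n d_n - f_n (Jd)_n)`.

If `f ∈ D(T)` and `d, Jd ∈ ℓ²`, this series is the limit of the same series for finitely
supported approximants of `f`, all of which sum to `0`; hence `[f, d]_N → 0`. Conversely, if
`Jf ∈ ℓ²` and `[f, 𝔭_v]_N → 0`, `[f, 𝔮_v]_N → 0`, subtract from `f` the combination of `𝔭_v`
and `𝔮_v` that agrees with `f` at `N` and `N + 1` (possible since `[𝔮_v, 𝔭_v]_N = 1`) and cut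
off after `N + 1`: the coefficients are `±[f, ·]_N → 0`, so these finitely supported sequences
converge to `f` in the graph norm and `f ∈ D(T)`.

For `f = 𝔭_u + α 𝔭_v` Green's formula gives `[f, 𝔭_v]_N → D(u,v)` and
`[f, 𝔮_v]_N → B(u,v) - α`, which yields both the criterion and the value of `α`.
-/
open Filter Topology MeasureTheory

noncomputable section

section JacobiOperator

variable {a b : ℕ → ℝ}

def wronskian (a : ℕ → ℝ) (c d : ℕ → ℂ) (N : ℕ) : ℂ :=
  a N * (c (N + 1) * d N - c N * d (N + 1))

theorem sum_range_jacobiMul_mul_sub (c d : ℕ → ℂ) (N : ℕ) :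
    ∑ n ∈ Finset.range (N + 1), (jacobiMul a b c n * d n - c n * jacobiMul a b d n) =
      wronskian a c d N := by
  induction N with
  | zero => simp [jacobiMul, wronskian]; ring
  | succ N ih =>
    rw [Finset.sum_range_succ, ih]
    simp only [jacobiMul, wronskian]
    ring

theorem tendsto_wronskian_of_hasSum {c d : ℕ → ℂ} {s : ℂ}
    (h : HasSum (fun n => jacobiMul a b c n * d n - c n * jacobiMul a b d n) s) :
    Tendsto (wronskian a c d) atTop (𝓝 s) :=
  (h.tendsto_sum_nat.comp (tendsto_add_atTop_nat 1)).congr (sum_range_jacobiMul_mul_sub c d)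

theorem hasSum_jacobiMul_mul_sub_of_finite_support {c : ℕ → ℂ}
    (hc : (Function.support c).Finite) (d : ℕ → ℂ) :
    HasSum (fun n => jacobiMul a b c n * d n - c n * jacobiMul a b d n) 0 := by
  obtain ⟨M, hM⟩ := hc.bddAbove
  have hc0 : ∀ n, M < n → c n = 0 := fun n hn =>
    Function.notMem_support.1 fun h => (hM h).not_gt hn
  have hsum : HasSum (fun n => jacobiMul a b c n * d n - c n * jacobiMul a b d n)
      (∑ n ∈ Finset.range (M + 2), (jacobiMul a b c n * d n - c n * jacobiMul a b d n)) :=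
    hasSum_sum_of_ne_finset_zero fun n hn => by
      obtain ⟨n, rfl⟩ : ∃ m, n = m + 1 := ⟨n - 1, by simp at hn; omega⟩
      simp only [Finset.mem_range] at hn
      simp only [jacobiMul, hc0 n (by omega), hc0 (n + 1) (by omega), hc0 (n + 2) (by omega)]
      ring
  rwa [sum_range_jacobiMul_mul_sub, wronskian, hc0 (M + 2) (by omega),
    hc0 (M + 1) (by omega), zero_mul, zero_mul, sub_zero, mul_zero] at hsum

variable (a b) in
def jacobiMulₗ : (ℕ → ℂ) →ₗ[ℂ] ℕ → ℂ where
  toFun := jacobiMul a b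
  map_add' c d := by ext (_ | n) <;> simp only [jacobiMul, Pi.add_apply] <;> ring
  map_smul' z c := by
    ext (_ | n) <;> simp only [jacobiMul, Pi.smul_apply, smul_eq_mul, RingHom.id_apply] <;> ring

theorem jacobiMulₗ_apply (c : ℕ → ℂ) : jacobiMulₗ a b c = jacobiMul a b c := rfl

theorem continuous_jacobiMul : Continuous (jacobiMul a b) :=
  continuous_pi fun n => by cases n <;> simp only [jacobiMul] <;> fun_prop

theorem jacobiMul_ite_lt {c : ℕ → ℂ} {N : ℕ} (hN : c N = 0) (hN' : c (N + 1) = 0) :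
    jacobiMul a b (fun n => if n < N + 2 then c n else 0) =
      fun n => if n < N + 1 then jacobiMul a b c n else 0 := by
  ext (_ | n)
  · simp [jacobiMul]
  · obtain h | rfl | rfl | h : n + 1 < N + 1 ∨ n = N ∨ n = N + 1 ∨ N + 2 ≤ n := by omega
    · simp [jacobiMul, h, show n < N + 2 by omega, show n + 1 < N + 2 by omega,
        show n + 2 < N + 2 by omega]
    · simp [jacobiMul, hN, hN']
    · simp [jacobiMul, hN']
    · simp [jacobiMul, show ¬n < N + 2 by omega, show ¬n + 1 < N + 1 by omega,
        show ¬n ≤ N by omega, show ¬n < N by omega]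

end JacobiOperator

open scoped lp ENNReal

section SquareSummable

variable {α : Type*} {E : α → Type*} [∀ i, NormedAddCommGroup (E i)]

theorem memℓp_two_iff {f : ∀ i, E i} : Memℓp f 2 ↔ Summable fun i => ‖f i‖ ^ 2 := by
  simpa using memℓp_gen_iff (p := 2) (by norm_num)

namespace lp

theorem summable_norm_sq (F : lp E 2) : Summable fun i => ‖F i‖ ^ 2 :=
  memℓp_two_iff.1 F.2

theorem norm_sq_eq_tsum (F : lp E 2) : ‖F‖ ^ 2 = ∑' i, ‖F i‖ ^ 2 := by
  simpa using lp.norm_rpow_eq_tsum (p := 2) (by norm_num) F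

theorem tendsto_iff_tendsto_tsum_sq {ι : Type*} {l : Filter ι} {X : ι → lp E 2} {F : lp E 2} :
    Tendsto X l (𝓝 F) ↔ Tendsto (fun k => ∑' i, ‖X k i - F i‖ ^ 2) l (𝓝 0) := by
  have hsq : ∀ k, ∑' i, ‖X k i - F i‖ ^ 2 = ‖X k - F‖ ^ 2 := fun k => by
    rw [norm_sq_eq_tsum]; rfl
  simp only [hsq, tendsto_iff_norm_sub_tendsto_zero (f := X)]
  refine ⟨fun h => by simpa using h.pow 2, fun h => ?_⟩
  simpa [Real.sqrt_sq (norm_nonneg _)] using h.sqrt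

theorem exists_tendsto_zero_of_tendsto_tsum_sq {ι : Type*} {l : Filter ι} {e : ι → ∀ i, E i}
    (hs : ∀ k, Summable fun i => ‖e k i‖ ^ 2) (ht : Tendsto (fun k => ∑' i, ‖e k i‖ ^ 2) l (𝓝 0)) :
    ∃ X : ι → lp E 2, (∀ k, ⇑(X k) = e k) ∧ Tendsto X l (𝓝 0) :=
  ⟨fun k => ⟨e k, memℓp_two_iff.2 (hs k)⟩, fun _ => rfl,
    tendsto_iff_tendsto_tsum_sq.2 (by simpa using ht)⟩

theorem summable_and_tendsto_tsum_sq {ι : Type*} {l : Filter ι} {X : ι → lp E 2} {F : lp E 2}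
    (h : Tendsto X l (𝓝 F)) :
    (∀ k, Summable fun i => ‖X k i - F i‖ ^ 2) ∧
      Tendsto (fun k => ∑' i, ‖X k i - F i‖ ^ 2) l (𝓝 0) :=
  ⟨fun k => summable_norm_sq (X k - F), tendsto_iff_tendsto_tsum_sq.1 h⟩

theorem tendsto_coeFn {p : ℝ≥0∞} [Fact (1 ≤ p)] {ι : Type*} {l : Filter ι} {X : ι → lp E p}
    {F : lp E p} (h : Tendsto X l (𝓝 F)) : Tendsto (fun k => ⇑(X k)) l (𝓝 ⇑F) :=
  (lp.uniformContinuous_coe.continuous.tendsto F).comp h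

private theorem holderConjugate_toReal_two :
    (2 : ℝ≥0∞).toReal.HolderConjugate (2 : ℝ≥0∞).toReal := by
  simpa using Real.HolderConjugate.two_two

variable {𝕜 : Type*} [RCLike 𝕜]

theorem summable_apply_mul (X Y : ℓ²(α, 𝕜)) : Summable fun i => X i * Y i :=
  .of_norm <| by simpa only [norm_mul] using lp.summable_mul holderConjugate_toReal_two X Y

theorem norm_tsum_apply_mul_le (X Y : ℓ²(α, 𝕜)) : ‖∑' i, X i * Y i‖ ≤ ‖X‖ * ‖Y‖ :=
  calc ‖∑' i, X i * Y i‖ ≤ ∑' i, ‖X i‖ * ‖Y i‖ := by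
        simpa only [norm_mul] using norm_tsum_le_tsum_norm (summable_apply_mul X Y).norm
    _ ≤ ‖X‖ * ‖Y‖ := lp.tsum_mul_le_mul_norm' holderConjugate_toReal_two X Y

theorem tendsto_tsum_apply_mul_of_tendsto_zero {ι : Type*} {l : Filter ι} {X : ι → ℓ²(α, 𝕜)}
    (hX : Tendsto X l (𝓝 0)) (Y : ℓ²(α, 𝕜)) : Tendsto (fun k => ∑' i, X k i * Y i) l (𝓝 0) :=
  squeeze_zero_norm (fun k => norm_tsum_apply_mul_le (X k) Y) <| by
    simpa using (tendsto_norm_zero.comp hX).mul_const ‖Y‖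

end lp

theorem tendsto_pi_of_tendsto_tsum_sq {ι : Type*} {l : Filter ι} {x : ι → ∀ i, E i}
    {f : ∀ i, E i} (hs : ∀ k, Summable fun i => ‖x k i - f i‖ ^ 2)
    (ht : Tendsto (fun k => ∑' i, ‖x k i - f i‖ ^ 2) l (𝓝 0)) :
    Tendsto x l (𝓝 f) := by
  obtain ⟨X, hX, hX0⟩ := lp.exists_tendsto_zero_of_tendsto_tsum_sq hs ht
  have := lp.tendsto_coeFn hX0
  simp only [hX, lp.coeFn_zero] at this
  exact tendsto_sub_nhds_zero_iff.1 this

variable {𝕜 : Type*} [RCLike 𝕜]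

def lpTrunc (M : ℕ) : ℓ²(ℕ, 𝕜) →ₗ[𝕜] ℓ²(ℕ, 𝕜) where
  toFun X := ∑ i ∈ Finset.range M, lp.single 2 i (X i)
  map_add' X Y := by
    simp only [lp.coeFn_add, Pi.add_apply, lp.single_add, Finset.sum_add_distrib]
  map_smul' c X := by
    simp only [lp.coeFn_smul, Pi.smul_apply, lp.single_smul, Finset.smul_sum, RingHom.id_apply]

theorem lpTrunc_apply (M : ℕ) (X : ℓ²(ℕ, 𝕜)) (n : ℕ) :
    lpTrunc M X n = if n < M then X n else 0 := by
  rw [lpTrunc, LinearMap.coe_mk, AddHom.coe_mk, lp.coeFn_sum, Finset.sum_apply]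
  simp [Pi.single_apply]

theorem tendsto_lpTrunc (X : ℓ²(ℕ, 𝕜)) : Tendsto (fun M => lpTrunc M X) atTop (𝓝 X) :=
  (lp.hasSum_single ENNReal.ofNat_ne_top X).tendsto_sum_nat

end SquareSummable

section ClosedJacobiOperator

variable {a b : ℕ → ℝ}

theorem jacobiGraph.jacobiMul_eq {f g : ℕ → ℂ} (h : jacobiGraph a b f g) :
    jacobiMul a b f = g := by
  obtain ⟨u, -, hsf, htf, hsg, htg⟩ := h
  exact tendsto_nhds_unique
    ((continuous_jacobiMul.tendsto f).comp (tendsto_pi_of_tendsto_tsum_sq hsf htf))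
    (tendsto_pi_of_tendsto_tsum_sq hsg htg)

theorem jacobiGraph.tendsto_wronskian {f g : ℕ → ℂ} (h : jacobiGraph a b f g)
    {D D' : ℓ²(ℕ, ℂ)} (hD : jacobiMul a b D = D') :
    Tendsto (wronskian a f D) atTop (𝓝 0) := by
  have hJf := h.jacobiMul_eq
  obtain ⟨u, hfin, hsf, htf, hsg, htg⟩ := h
  obtain ⟨E, hE, hE0⟩ := lp.exists_tendsto_zero_of_tendsto_tsum_sq hsf htf
  obtain ⟨E', hE', hE'0⟩ := lp.exists_tendsto_zero_of_tendsto_tsum_sq hsg htg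
  set r : ℕ → ℂ := fun k => ∑' n, E' k n * D n - ∑' n, E k n * D' n
  have hsum : ∀ k, HasSum (fun n => g n * D n - f n * D' n) (-r k) := fun k => by
    have := (hasSum_jacobiMul_mul_sub_of_finite_support (a := a) (b := b) (hfin k) D).sub
      (((lp.summable_apply_mul (E' k) D).hasSum).sub (lp.summable_apply_mul (E k) D').hasSum)
    refine (zero_sub (r k)) ▸ this.congr_fun fun n => ?_
    simp only [hD, hE, hE']
    ring
  have hr : Tendsto r atTop (𝓝 0) := by
    simpa using (lp.tendsto_tsum_apply_mul_of_tendsto_zero hE'0 D).sub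
      (lp.tendsto_tsum_apply_mul_of_tendsto_zero hE0 D')
  have hr0 : r 0 = 0 := tendsto_nhds_unique
    (tendsto_const_nhds.congr fun k => neg_injective ((hsum k).unique (hsum 0)).symm) hr
  apply tendsto_wronskian_of_hasSum
  rw [hJf, hD, ← neg_zero, ← hr0]
  exact hsum 0

theorem jacobiGraph_of_tendsto_wronskian {F G P P' Q Q' : ℓ²(ℕ, ℂ)}
    (hF : jacobiMul a b F = G) (hP : jacobiMul a b P = P') (hQ : jacobiMul a b Q = Q')
    (hQP : ∀ n, wronskian a Q P n = 1) (hFP : Tendsto (wronskian a F P) atTop (𝓝 0))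
    (hFQ : Tendsto (wronskian a F Q) atTop (𝓝 0)) :
    jacobiGraph a b F G := by
  set W : ℕ → ℓ²(ℕ, ℂ) := fun N => F + wronskian a F Q N • P - wronskian a F P N • Q
  have hW : ∀ N, W N N = 0 ∧ W N (N + 1) = 0 := fun N => by
    have h := hQP N
    simp only [W, wronskian, lp.coeFn_add, lp.coeFn_sub, lp.coeFn_smul, Pi.add_apply,
      Pi.sub_apply, Pi.smul_apply, smul_eq_mul] at h ⊢
    constructor <;> linear_combination (-F _) * h
  have hJW : ∀ N, jacobiMul a b (W N) = ⇑(G + wronskian a F Q N • P' - wronskian a F P N • Q') :=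
    fun N => by
      simp only [W, ← jacobiMulₗ_apply, lp.coeFn_add, lp.coeFn_sub, lp.coeFn_smul, map_add,
        map_sub, map_smul]
      simp only [jacobiMulₗ_apply, hF, hP, hQ]
  have hJU : ∀ N, jacobiMul a b (lpTrunc (N + 2) (W N)) =
      lpTrunc (N + 1) (G + wronskian a F Q N • P' - wronskian a F P N • Q') := fun N => by
    rw [funext (lpTrunc_apply _ _), jacobiMul_ite_lt (hW N).1 (hW N).2, hJW]
    exact funext fun n => (lpTrunc_apply _ _ n).symm
  have hlim : ∀ (X Y Z : ℓ²(ℕ, ℂ)) (k : ℕ), Tendsto (fun N =>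
      lpTrunc (N + k) (X + wronskian a F Q N • Y - wronskian a F P N • Z)) atTop (𝓝 X) := by
    intro X Y Z k
    have ht := fun V : ℓ²(ℕ, ℂ) => (tendsto_lpTrunc V).comp (tendsto_add_atTop_nat k)
    simpa using ((ht X).add (hFQ.smul (ht Y))).sub (hFP.smul (ht Z))
  obtain ⟨hsF, htF⟩ := lp.summable_and_tendsto_tsum_sq (hlim F P Q 2)
  obtain ⟨hsG, htG⟩ := lp.summable_and_tendsto_tsum_sq (hlim G P' Q' 1)
  refine ⟨fun N => lpTrunc (N + 2) (W N), fun N => ?_, hsF, htF, ?_, ?_⟩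
  · refine (Set.finite_Iio (N + 2)).subset fun n hn => ?_
    by_contra hn'
    exact hn (by simp [lpTrunc_apply, show ¬n < N + 2 from hn'])
  · simpa only [hJU] using hsG
  · simpa only [hJU] using htG

end ClosedJacobiOperator

namespace JacobiSetup

variable (S : JacobiSetup)

def pVec (z : ℂ) : ℓ²(ℕ, ℂ) :=
  ⟨fun n => S.p n z, memℓp_two_iff.2 <|
    (S.indet z).of_nonneg_of_le (fun _ => sq_nonneg _) fun _ => le_add_of_nonneg_right (sq_nonneg _)⟩

def qVec (z : ℂ) : ℓ²(ℕ, ℂ) :=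
  ⟨fun n => S.q n z, memℓp_two_iff.2 <|
    (S.indet z).of_nonneg_of_le (fun _ => sq_nonneg _) fun _ => le_add_of_nonneg_left (sq_nonneg _)⟩

@[simp] theorem pVec_apply (z : ℂ) (n : ℕ) : S.pVec z n = S.p n z := rfl

@[simp] theorem qVec_apply (z : ℂ) (n : ℕ) : S.qVec z n = S.q n z := rfl

theorem jacobiMul_pVec (z : ℂ) : jacobiMul S.a S.b (S.pVec z) = ⇑(z • S.pVec z) := by
  have ha : (S.a 0 : ℂ) ≠ 0 := Complex.ofReal_ne_zero.2 (S.ha 0).ne'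
  ext (_ | n)
  · simp only [jacobiMul, pVec_apply, lp.coeFn_smul, Pi.smul_apply, smul_eq_mul, S.hp0, S.hp1]
    field_simp
    ring
  · simp only [jacobiMul, pVec_apply, lp.coeFn_smul, Pi.smul_apply, smul_eq_mul]
    linear_combination -S.hrecp n z

theorem jacobiMul_qVec (z : ℂ) :
    jacobiMul S.a S.b (S.qVec z) = ⇑(z • S.qVec z + lp.single 2 0 1 : ℓ²(ℕ, ℂ)) := by
  have ha : (S.a 0 : ℂ) ≠ 0 := Complex.ofReal_ne_zero.2 (S.ha 0).ne'
  ext (_ | n)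
  · simp only [jacobiMul, qVec_apply, lp.coeFn_add, lp.coeFn_smul, Pi.add_apply, Pi.smul_apply,
      smul_eq_mul, lp.single_apply, Pi.single_eq_same, S.hq0, S.hq1]
    field_simp
    ring
  · simp only [jacobiMul, qVec_apply, lp.coeFn_add, lp.coeFn_smul, Pi.add_apply, Pi.smul_apply,
      smul_eq_mul, lp.single_apply, Pi.single_apply, Nat.succ_ne_zero, if_false, add_zero]
    linear_combination -S.hrecq n z

theorem wronskian_qVec_pVec (z : ℂ) (n : ℕ) : wronskian S.a (S.qVec z) (S.pVec z) n = 1 := by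
  induction n with
  | zero =>
    have ha : (S.a 0 : ℂ) ≠ 0 := Complex.ofReal_ne_zero.2 (S.ha 0).ne'
    simp only [wronskian, qVec_apply, pVec_apply, S.hp0, S.hp1, S.hq0, S.hq1]
    field_simp
    ring
  | succ n ih =>
    simp only [wronskian, qVec_apply, pVec_apply] at ih ⊢
    linear_combination ih - S.p (n + 1) z * S.hrecq n z + S.q (n + 1) z * S.hrecp n z

theorem coe_pVec_add_smul (u v α : ℂ) :
    ⇑(S.pVec u + α • S.pVec v) = fun n => S.p n u + α * S.p n v :=
  rfl

theorem jacobiMul_p_add_mul (u v α : ℂ) :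
    jacobiMul S.a S.b (fun n => S.p n u + α * S.p n v) = ⇑(u • S.pVec u + α • v • S.pVec v) := by
  rw [← coe_pVec_add_smul, ← jacobiMulₗ_apply, lp.coeFn_add, lp.coeFn_smul, map_add, map_smul,
    jacobiMulₗ_apply, jacobiMulₗ_apply, jacobiMul_pVec, jacobiMul_pVec]
  rfl

theorem tendsto_wronskian_pVec (u v α : ℂ) :
    Tendsto (wronskian S.a (fun n => S.p n u + α * S.p n v) (S.pVec v)) atTop
      (𝓝 (nevD S u v)) := by
  apply tendsto_wronskian_of_hasSum
  rw [jacobiMul_p_add_mul, jacobiMul_pVec]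
  refine ((lp.summable_apply_mul (S.pVec u) (S.pVec v)).hasSum.mul_left (u - v)).congr_fun
    fun n => ?_
  simp only [lp.coeFn_add, Pi.add_apply]
  simp only [lp.coeFn_smul, Pi.smul_apply, smul_eq_mul, pVec_apply]
  ring

theorem tendsto_wronskian_qVec (u v α : ℂ) :
    Tendsto (wronskian S.a (fun n => S.p n u + α * S.p n v) (S.qVec v)) atTop
      (𝓝 (nevB S u v - α)) := by
  apply tendsto_wronskian_of_hasSum
  rw [jacobiMul_p_add_mul, jacobiMul_qVec,
    show nevB S u v - α = (u - v) * ∑' n, S.p n u * S.q n v - (1 + α) by rw [nevB]; ring]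
  refine (((lp.summable_apply_mul (S.pVec u) (S.qVec v)).hasSum.mul_left (u - v)).sub
    (hasSum_pi_single 0 (1 + α))).congr_fun fun n => ?_
  simp only [lp.coeFn_add, Pi.add_apply]
  simp only [lp.coeFn_smul, Pi.smul_apply, smul_eq_mul, pVec_apply, qVec_apply, lp.single_apply,
    Pi.single_apply]
  split_ifs with hn
  · simp only [hn, S.hp0]
    ring
  · ring

theorem inDomT_p_add_nevB_mul (u v : ℂ) (hD : nevD S u v = 0) :
    inDomT S.a S.b fun n => S.p n u + nevB S u v * S.p n v := by
  have hF := S.jacobiMul_p_add_mul u v (nevB S u v)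
  have hFP := S.tendsto_wronskian_pVec u v (nevB S u v)
  have hFQ := S.tendsto_wronskian_qVec u v (nevB S u v)
  rw [hD] at hFP
  rw [sub_self] at hFQ
  rw [← coe_pVec_add_smul] at hF hFP hFQ ⊢
  exact ⟨_, jacobiGraph_of_tendsto_wronskian hF (S.jacobiMul_pVec v) (S.jacobiMul_qVec v)
    (S.wronskian_qVec_pVec v) hFP hFQ⟩

end JacobiSetup

/-- There exists `α` with `𝔭_u + α 𝔭_v ∈ D(T)` iff `D(u,v) = 0`, and in the affirmative
case `α` is unique and equals `B(u,v)`. -/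
theorem stmt1 (S : JacobiSetup) (u v : ℂ) :
    ((∃ α : ℂ, inDomT S.a S.b fun n => S.p n u + α * S.p n v) ↔ nevD S u v = 0) ∧
    ∀ α : ℂ, (inDomT S.a S.b fun n => S.p n u + α * S.p n v) → α = nevB S u v := by
  have forward : ∀ α : ℂ, (inDomT S.a S.b fun n => S.p n u + α * S.p n v) →
      nevD S u v = 0 ∧ α = nevB S u v := by
    rintro α ⟨g, hg⟩
    refine ⟨tendsto_nhds_unique (S.tendsto_wronskian_pVec u v α)
      (hg.tendsto_wronskian (S.jacobiMul_pVec v)), ?_⟩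
    exact (sub_eq_zero.1 (tendsto_nhds_unique (S.tendsto_wronskian_qVec u v α)
      (hg.tendsto_wronskian (S.jacobiMul_qVec v)))).symm
  exact ⟨⟨fun ⟨α, hα⟩ => (forward α hα).1, fun hD => ⟨_, S.inDomT_p_add_nevB_mul u v hD⟩⟩,
    fun α hα => (forward α hα).2⟩
end
end

section
/- Let v ∈ ℝ and let u ∈ ℝ satisfy D(u,v) = 0, u < v, and D(x,v) ≠ 0 for all x in the open interval (u,v). Then B(u,v) is a positive real number. -/
open Filter Topology MeasureTheory

noncomputable section

/-!
On the real axis `p` and `q` are real. By Christoffel–Darboux, `D(x,y)` and `B(x,y)` are the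
limits of the Wronskians `aₙ (pₙ₊₁(x) rₙ(y) - pₙ(x) rₙ₊₁(y))` with `r = p`, resp. `r = q`, and since
the Wronskian of `p` and `q` at one point is `-1`, a Plücker relation passes to the limit as
`B(x,v) D(y,v) - B(y,v) D(x,v) = D(x,y)`. At `x = u` this reads `B(u,v) D(y,v) = D(u,y)`. For
`y ∈ (u,v)` near `u` both `D(y,v)` and `D(u,y)` are negative: `D(·,v)` has no zero in `(u,v)` and
is negative just left of `v`, while `D(u,y) / (u - y) → ∑ pₖ(u)² > 0`. The continuity this needs
comes from variation of parameters, which makes `∑ pₖ(x)²` locally bounded.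
-/

open Finset ComplexConjugate

theorem summable_mul_of_summable_sq {ι : Type*} {f g : ι → ℝ} (hf : Summable fun i => f i ^ 2)
    (hg : Summable fun i => g i ^ 2) : Summable fun i => f i * g i :=
  ((hf.add hg).div_const 2).of_norm_bounded fun i => by
    rw [norm_mul, Real.norm_eq_abs, Real.norm_eq_abs, le_div_iff₀ two_pos]
    nlinarith [two_mul_le_add_sq |f i| |g i|, sq_abs (f i), sq_abs (g i)]

theorem sq_tsum_mul_le {f g : ℕ → ℝ} (hf : Summable fun k => f k ^ 2)
    (hg : Summable fun k => g k ^ 2) :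
    (∑' k, f k * g k) ^ 2 ≤ (∑' k, f k ^ 2) * ∑' k, g k ^ 2 :=
  le_of_tendsto_of_tendsto' ((summable_mul_of_summable_sq hf hg).hasSum.tendsto_sum_nat.pow 2)
    (hf.hasSum.tendsto_sum_nat.mul hg.hasSum.tendsto_sum_nat)
    fun _ => sum_mul_sq_le_sq_mul_sq _ _ _

/-- The partial sums converge uniformly on `s`, by Cauchy–Schwarz applied to the tails. -/
theorem continuousAt_tsum_mul_of_tsum_sq_le {X : Type*} [TopologicalSpace X] {f : ℕ → X → ℝ}
    {c : ℕ → ℝ} {s : Set X} {w : X} {M : ℝ} (hf : ∀ k, Continuous (f k)) (hs : s ∈ 𝓝 w)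
    (hfs : ∀ x ∈ s, Summable fun k => f k x ^ 2) (hM : ∀ x ∈ s, ∑' k, f k x ^ 2 ≤ M)
    (hc : Summable fun k => c k ^ 2) :
    ContinuousAt (fun x => ∑' k, f k x * c k) w := by
  have tail : ∀ x ∈ s, ∀ n, (∑' k, f k x * c k - ∑ k ∈ range n, f k x * c k) ^ 2 ≤
      M * ∑' k, c (k + n) ^ 2 := by
    intro x hx n
    rw [← (summable_mul_of_summable_sq (hfs x hx) hc).sum_add_tsum_nat_add n, add_sub_cancel_left]
    calc (∑' k, f (k + n) x * c (k + n)) ^ 2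
        ≤ (∑' k, f (k + n) x ^ 2) * ∑' k, c (k + n) ^ 2 :=
          sq_tsum_mul_le ((summable_nat_add_iff n).2 (hfs x hx)) ((summable_nat_add_iff n).2 hc)
      _ ≤ M * ∑' k, c (k + n) ^ 2 := by
          refine mul_le_mul_of_nonneg_right ?_ (tsum_nonneg fun _ => sq_nonneg _)
          exact (tsum_comp_le_tsum_of_inj (hfs x hx) (fun _ => sq_nonneg _)
            (add_left_injective n)).trans (hM x hx)
  have hunif : TendstoUniformlyOn (fun n x => ∑ k ∈ range n, f k x * c k)
      (fun x => ∑' k, f k x * c k) atTop s := by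
    rw [Metric.tendstoUniformlyOn_iff]
    intro ε hε
    have hsmall : Tendsto (fun n => M * ∑' k, c (k + n) ^ 2) atTop (𝓝 0) := by
      simpa using (tendsto_sum_nat_add fun k => c k ^ 2).const_mul M
    filter_upwards [hsmall.eventually (gt_mem_nhds (pow_pos hε 2))] with n hn x hx
    exact abs_lt_of_sq_lt_sq ((tail x hx n).trans_lt hn) hε.le
  refine (hunif.continuousOn (Frequently.of_forall fun n => ?_)).continuousAt hs
  exact (continuous_finsetSum _ fun k _ => (hf k).mul continuous_const).continuousOn

namespace JacobiSetup

variable (S : JacobiSetup)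

theorem conj_apply_of_rec (r : ℕ → ℂ → ℂ) (h0 : ∀ z, r 0 (conj z) = conj (r 0 z))
    (h1 : ∀ z, r 1 (conj z) = conj (r 1 z))
    (hrec : ∀ n z, z * r (n + 1) z =
      (S.a (n + 1) : ℂ) * r (n + 2) z + (S.b (n + 1) : ℂ) * r (n + 1) z + (S.a n : ℂ) * r n z)
    (n : ℕ) (z : ℂ) : r n (conj z) = conj (r n z) := by
  induction n using Nat.twoStepInduction with
  | zero => exact h0 z
  | one => exact h1 z
  | more n ih1 ih2 =>
    have ha : (S.a (n + 1) : ℂ) ≠ 0 := Complex.ofReal_ne_zero.2 (S.ha (n + 1)).ne'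
    have solve : ∀ z, r (n + 2) z =
        ((z - S.b (n + 1)) * r (n + 1) z - S.a n * r n z) / S.a (n + 1) := fun z => by
      rw [eq_div_iff ha]; linear_combination -hrec n z
    rw [solve, solve, ih1, ih2]
    simp [map_div₀]

def P (n : ℕ) (x : ℝ) : ℝ := (S.p n x).re

def Q (n : ℕ) (x : ℝ) : ℝ := (S.q n x).re

theorem ofReal_P (n : ℕ) (x : ℝ) : (S.P n x : ℂ) = S.p n x := by
  refine Complex.conj_eq_iff_re.1 ?_
  simpa using (S.conj_apply_of_rec S.p (by simp [S.hp0]) (by simp [S.hp1]) S.hrecp n x).symm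

theorem ofReal_Q (n : ℕ) (x : ℝ) : (S.Q n x : ℂ) = S.q n x := by
  refine Complex.conj_eq_iff_re.1 ?_
  simpa using (S.conj_apply_of_rec S.q (by simp [S.hq0]) (by simp [S.hq1]) S.hrecq n x).symm

theorem P_zero (x : ℝ) : S.P 0 x = 1 := by simp [P, S.hp0]

theorem P_one (x : ℝ) : S.P 1 x = (x - S.b 0) / S.a 0 := by simp [P, S.hp1]

theorem Q_zero (x : ℝ) : S.Q 0 x = 0 := by simp [Q, S.hq0]

theorem Q_one (x : ℝ) : S.Q 1 x = 1 / S.a 0 := by simp [Q, S.hq1]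

-- No condition in row `0`, so that `Q` is a solution as well as `P`.
def IsSolution (x : ℝ) (r : ℕ → ℝ) : Prop :=
  ∀ n, x * r (n + 1) = S.a (n + 1) * r (n + 2) + S.b (n + 1) * r (n + 1) + S.a n * r n

def wronskian (r s : ℕ → ℝ) (n : ℕ) : ℝ := S.a n * (r (n + 1) * s n - r n * s (n + 1))

variable {S}

theorem IsSolution.wronskian_succ_sub {x y : ℝ} {r s : ℕ → ℝ} (hr : S.IsSolution x r)
    (hs : S.IsSolution y s) (n : ℕ) :
    S.wronskian r s (n + 1) - S.wronskian r s n = (x - y) * (r (n + 1) * s (n + 1)) := by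
  unfold wronskian
  linear_combination r (n + 1) * hs n - s (n + 1) * hr n

theorem IsSolution.mul_sum_range_succ {x y : ℝ} {r s : ℕ → ℝ} (hr : S.IsSolution x r)
    (hs : S.IsSolution y s) (n : ℕ) :
    (x - y) * ∑ k ∈ range (n + 1), r k * s k =
      S.wronskian r s n - S.wronskian r s 0 + (x - y) * (r 0 * s 0) := by
  rw [sum_range_succ', mul_add, mul_sum, ← sum_range_sub (S.wronskian r s) n]
  simp only [hr.wronskian_succ_sub hs]

theorem IsSolution.wronskian_eq_wronskian_zero {x : ℝ} {r s : ℕ → ℝ} (hr : S.IsSolution x r)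
    (hs : S.IsSolution x s) (n : ℕ) : S.wronskian r s n = S.wronskian r s 0 := by
  have h := hr.mul_sum_range_succ hs n
  rw [sub_self, zero_mul, zero_mul, add_zero] at h
  linarith

variable (S)

theorem isSolution_P (x : ℝ) : S.IsSolution x (S.P · x) := fun n => by
  have h := S.hrecp n x
  simp only [← ofReal_P] at h
  exact_mod_cast h

theorem isSolution_Q (x : ℝ) : S.IsSolution x (S.Q · x) := fun n => by
  have h := S.hrecq n x
  simp only [← ofReal_Q] at h
  exact_mod_cast h

theorem wronskian_P_P_zero (x y : ℝ) : S.wronskian (S.P · x) (S.P · y) 0 = x - y := by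
  simp only [wronskian, zero_add, P_zero, P_one]
  field_simp [(S.ha 0).ne']
  ring

theorem wronskian_P_Q_zero (x y : ℝ) : S.wronskian (S.P · x) (S.Q · y) 0 = -1 := by
  simp only [wronskian, zero_add, P_zero, Q_zero, Q_one]
  field_simp [(S.ha 0).ne']
  ring

theorem wronskian_P_Q_self (x : ℝ) (n : ℕ) : S.wronskian (S.P · x) (S.Q · x) n = -1 := by
  rw [(S.isSolution_P x).wronskian_eq_wronskian_zero (S.isSolution_Q x), wronskian_P_Q_zero]

theorem summable_sq_P_add_sq_Q (x : ℝ) : Summable fun k => S.P k x ^ 2 + S.Q k x ^ 2 := by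
  simpa only [← ofReal_P, ← ofReal_Q, Complex.norm_real, Real.norm_eq_abs, sq_abs] using
    S.indet x

theorem summable_sq_P (x : ℝ) : Summable fun k => S.P k x ^ 2 :=
  (S.summable_sq_P_add_sq_Q x).of_nonneg_of_le (fun _ => sq_nonneg _)
    fun k => le_add_of_nonneg_right (sq_nonneg (S.Q k x))

theorem summable_sq_Q (x : ℝ) : Summable fun k => S.Q k x ^ 2 :=
  (S.summable_sq_P_add_sq_Q x).of_nonneg_of_le (fun _ => sq_nonneg _)
    fun k => le_add_of_nonneg_left (sq_nonneg (S.P k x))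

def D (x y : ℝ) : ℝ := (x - y) * ∑' k, S.P k x * S.P k y

def B (x y : ℝ) : ℝ := -1 + (x - y) * ∑' k, S.P k x * S.Q k y

theorem nevD_ofReal (x y : ℝ) : nevD S x y = S.D x y := by
  simp only [nevD, D, ← ofReal_P, ← Complex.ofReal_mul, ← Complex.ofReal_tsum,
    ← Complex.ofReal_sub]

theorem nevB_ofReal (x y : ℝ) : nevB S x y = S.B x y := by
  simp only [nevB, B, ← ofReal_P, ← ofReal_Q, ← Complex.ofReal_mul, ← Complex.ofReal_tsum,
    ← Complex.ofReal_sub]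
  push_cast
  ring

theorem tendsto_wronskian_P_P (x y : ℝ) :
    Tendsto (S.wronskian (S.P · x) (S.P · y)) atTop (𝓝 (S.D x y)) := by
  have hsum := (summable_mul_of_summable_sq (S.summable_sq_P x)
    (S.summable_sq_P y)).hasSum.tendsto_sum_nat.comp (tendsto_add_atTop_nat 1)
  refine (hsum.const_mul (x - y)).congr fun n => ?_
  rw [Function.comp_apply, (S.isSolution_P x).mul_sum_range_succ (S.isSolution_P y),
    wronskian_P_P_zero, P_zero, P_zero]
  ring

theorem tendsto_wronskian_P_Q (x y : ℝ) :
    Tendsto (S.wronskian (S.P · x) (S.Q · y)) atTop (𝓝 (S.B x y)) := by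
  have hsum := (summable_mul_of_summable_sq (S.summable_sq_P x)
    (S.summable_sq_Q y)).hasSum.tendsto_sum_nat.comp (tendsto_add_atTop_nat 1)
  refine ((hsum.const_mul (x - y)).const_add (-1)).congr fun n => ?_
  rw [Function.comp_apply, (S.isSolution_P x).mul_sum_range_succ (S.isSolution_Q y),
    wronskian_P_Q_zero, Q_zero]
  ring

/-- The limit of a Plücker relation among `2 × 2` determinants, normalised by
`S.wronskian_P_Q_self`. -/
theorem B_mul_D_sub_B_mul_D (x y v : ℝ) : S.B x v * S.D y v - S.B y v * S.D x v = S.D x y := by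
  refine tendsto_nhds_unique (((S.tendsto_wronskian_P_Q x v).mul (S.tendsto_wronskian_P_P y v)).sub
    ((S.tendsto_wronskian_P_Q y v).mul (S.tendsto_wronskian_P_P x v))) ?_
  refine (S.tendsto_wronskian_P_P x y).congr fun n => ?_
  have hw := S.wronskian_P_Q_self v n
  simp only [wronskian] at hw ⊢
  linear_combination (S.a n * (S.P (n + 1) x * S.P n y - S.P n x * S.P (n + 1) y)) * hw

theorem continuous_P (n : ℕ) : Continuous (S.P n) := by
  induction n using Nat.twoStepInduction with
  | zero =>
    have h : S.P 0 = fun _ => 1 := funext S.P_zero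
    rw [h]
    exact continuous_const
  | one =>
    have h : S.P 1 = fun x => (x - S.b 0) / S.a 0 := funext S.P_one
    rw [h]
    fun_prop
  | more n ih1 ih2 =>
    have h : S.P (n + 2) = fun x => ((x - S.b (n + 1)) * S.P (n + 1) x - S.a n * S.P n x) /
        S.a (n + 1) := funext fun x => by
      rw [eq_div_iff (S.ha (n + 1)).ne']
      linear_combination -S.isSolution_P x n
    rw [h]
    fun_prop

/-- The discrete Green kernel of the recurrence at `w`. -/
def green (w : ℝ) (n j : ℕ) : ℝ := S.Q n w * S.P j w - S.P n w * S.Q j w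

theorem green_rec (w : ℝ) (n j : ℕ) :
    S.a (n + 1) * S.green w (n + 2) j =
      (w - S.b (n + 1)) * S.green w (n + 1) j - S.a n * S.green w n j := by
  unfold green
  linear_combination S.Q j w * S.isSolution_P w n - S.P j w * S.isSolution_Q w n

theorem sum_green_rec (w x : ℝ) (n : ℕ) :
    S.a (n + 1) * ∑ j ∈ range (n + 2), S.green w (n + 2) j * S.P j x =
      (w - S.b (n + 1)) * ∑ j ∈ range (n + 1), S.green w (n + 1) j * S.P j x -
        S.a n * ∑ j ∈ range n, S.green w n j * S.P j x + S.P (n + 1) x := by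
  have hterm j : S.a (n + 1) * (S.green w (n + 2) j * S.P j x) =
      (w - S.b (n + 1)) * (S.green w (n + 1) j * S.P j x) - S.a n * (S.green w n j * S.P j x) := by
    rw [← mul_assoc, green_rec]
    ring
  have hwr := S.wronskian_P_Q_self w n
  rw [mul_sum, sum_congr rfl fun j _ => hterm j, sum_sub_distrib, ← mul_sum, ← mul_sum]
  simp only [sum_range_succ _ (n + 1), sum_range_succ _ n]
  simp only [green, wronskian] at hwr ⊢
  linear_combination -S.P (n + 1) x * hwr

/-- Variation of parameters: `P(x)` solves the recurrence at `w` with the forcing term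
`(x - w) P(x)`. -/
theorem P_eq_add_sum_green (w x : ℝ) (n : ℕ) :
    S.P n x = S.P n w + (x - w) * ∑ j ∈ range n, S.green w n j * S.P j x := by
  induction n using Nat.twoStepInduction with
  | zero => simp [P_zero]
  | one =>
    simp only [sum_range_one, green, P_zero, P_one, Q_zero, Q_one]
    field_simp [(S.ha 0).ne']
    ring
  | more n ih1 ih2 =>
    apply mul_left_cancel₀ (S.ha (n + 1)).ne'
    linear_combination -S.isSolution_P x n + S.isSolution_P w n - (x - w) * S.sum_green_rec w x n +
      (w - S.b (n + 1)) * ih2 - S.a n * ih1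

def energy (w : ℝ) : ℝ := ∑' k, (S.P k w ^ 2 + S.Q k w ^ 2)

theorem sum_range_le_energy (w : ℝ) (n : ℕ) :
    ∑ k ∈ range n, (S.P k w ^ 2 + S.Q k w ^ 2) ≤ S.energy w :=
  (S.summable_sq_P_add_sq_Q w).sum_le_tsum _ fun _ _ => by positivity

theorem energy_pos (w : ℝ) : 0 < S.energy w :=
  zero_lt_one.trans_le (by simpa [P_zero, Q_zero] using S.sum_range_le_energy w 1)

theorem sum_sq_green_le (w : ℝ) (n : ℕ) :
    ∑ j ∈ range n, S.green w n j ^ 2 ≤ (S.P n w ^ 2 + S.Q n w ^ 2) * S.energy w :=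
  calc ∑ j ∈ range n, S.green w n j ^ 2
      ≤ ∑ j ∈ range n, (S.P n w ^ 2 + S.Q n w ^ 2) * (S.P j w ^ 2 + S.Q j w ^ 2) :=
        sum_le_sum fun j _ => by
          unfold green
          nlinarith [sq_nonneg (S.Q n w * S.Q j w + S.P n w * S.P j w)]
    _ ≤ (S.P n w ^ 2 + S.Q n w ^ 2) * S.energy w := by
        rw [← mul_sum]
        exact mul_le_mul_of_nonneg_left (S.sum_range_le_energy w n) (by positivity)

theorem sq_P_le (w x : ℝ) (n : ℕ) :
    S.P n x ^ 2 ≤ 2 * S.P n w ^ 2 +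
      2 * (x - w) ^ 2 * S.energy w * (S.P n w ^ 2 + S.Q n w ^ 2) *
        ∑ j ∈ range n, S.P j x ^ 2 := by
  set s := ∑ j ∈ range n, S.green w n j * S.P j x
  have hs : s ^ 2 ≤ (S.P n w ^ 2 + S.Q n w ^ 2) * S.energy w * ∑ j ∈ range n, S.P j x ^ 2 :=
    (sum_mul_sq_le_sq_mul_sq _ _ _).trans <|
      mul_le_mul_of_nonneg_right (S.sum_sq_green_le w n) (sum_nonneg fun _ _ => sq_nonneg _)
  rw [S.P_eq_add_sum_green w x n]
  nlinarith [sq_nonneg (S.P n w - (x - w) * s), mul_le_mul_of_nonneg_left hs (sq_nonneg (x - w))]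

theorem sum_range_sq_P_le {w x : ℝ} (hx : x ∈ Metric.closedBall w (1 / (2 * S.energy w))) (N : ℕ) :
    ∑ k ∈ range N, S.P k x ^ 2 ≤ 4 * S.energy w := by
  set E := S.energy w
  set T := ∑ k ∈ range N, S.P k x ^ 2
  have hE : 0 < E := S.energy_pos w
  have hxw : 4 * ((x - w) * E) ^ 2 ≤ 1 := by
    rw [Metric.mem_closedBall, Real.dist_eq, le_div_iff₀ (by positivity)] at hx
    have h := mul_le_mul hx hx (by positivity) zero_le_one
    rw [← sq_abs ((x - w) * E), abs_mul, abs_of_pos hE]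
    linarith
  have hT0 : 0 ≤ T := sum_nonneg fun _ _ => sq_nonneg _
  have hterm : ∀ n ∈ range N, S.P n x ^ 2 ≤
      2 * S.P n w ^ 2 + 2 * (x - w) ^ 2 * E * (S.P n w ^ 2 + S.Q n w ^ 2) * T := by
    intro n hn
    refine (S.sq_P_le w x n).trans ?_
    gcongr
    exact sum_le_sum_of_subset_of_nonneg (range_subset_range.2 (mem_range.1 hn).le)
      fun _ _ _ => sq_nonneg _
  have hT : T ≤ 2 * E + 2 * (x - w) ^ 2 * E * E * T := by
    refine (sum_le_sum hterm).trans ?_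
    rw [sum_add_distrib, ← mul_sum, ← sum_mul, ← mul_sum]
    gcongr
    · exact (sum_le_sum fun k _ => le_add_of_nonneg_right (sq_nonneg (S.Q k w))).trans
        (S.sum_range_le_energy w N)
    · exact S.sum_range_le_energy w N
  nlinarith [mul_le_mul_of_nonneg_right hxw hT0]

theorem continuous_tsum_P_mul {c : ℕ → ℝ} (hc : Summable fun k => c k ^ 2) :
    Continuous fun x => ∑' k, S.P k x * c k :=
  continuous_iff_continuousAt.2 fun w =>
    continuousAt_tsum_mul_of_tsum_sq_le S.continuous_P
      (Metric.closedBall_mem_nhds w (one_div_pos.2 (mul_pos two_pos (S.energy_pos w))))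
      (fun x _ => S.summable_sq_P x)
      (fun _ hx => Real.tsum_le_of_sum_range_le (fun _ => sq_nonneg _) (S.sum_range_sq_P_le hx)) hc

theorem continuous_D_left (v : ℝ) : Continuous fun y => S.D y v :=
  (continuous_id.sub continuous_const).mul (S.continuous_tsum_P_mul (S.summable_sq_P v))

theorem eventually_tsum_P_mul_pos (v : ℝ) : ∀ᶠ y in 𝓝 v, 0 < ∑' k, S.P k y * S.P k v := by
  refine continuousAt_const.eventually_lt
    (S.continuous_tsum_P_mul (S.summable_sq_P v)).continuousAt ?_
  refine (summable_mul_of_summable_sq (S.summable_sq_P v) (S.summable_sq_P v)).tsum_pos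
    (fun _ => mul_self_nonneg _) 0 ?_
  simp [P_zero]

/-- `D(·, v)` is negative just left of `v`, so by the intermediate value theorem it stays
negative on any interval `(u, v)` free of its zeros. -/
theorem D_neg_of_mem_Ioo {u v y : ℝ} (hne : ∀ x ∈ Set.Ioo u v, S.D x v ≠ 0)
    (hy : y ∈ Set.Ioo u v) : S.D y v < 0 := by
  obtain ⟨y₁, hpos, hy₁⟩ := ((S.eventually_tsum_P_mul_pos v).filter_mono nhdsWithin_le_nhds |>.and
    (Ioo_mem_nhdsLT_of_mem ⟨hy.1.trans hy.2, le_rfl⟩)).exists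
  have hD₁ : S.D y₁ v < 0 := mul_neg_of_neg_of_pos (sub_neg.2 hy₁.2) hpos
  by_contra! h
  obtain ⟨z, hz, hz0⟩ := isPreconnected_Ioo.intermediate_value hy₁ hy
    (S.continuous_D_left v).continuousOn ⟨hD₁.le, h⟩
  exact hne z hz hz0

end JacobiSetup

/-- If `v ∈ ℝ`, `u ∈ ℝ` with `D(u,v) = 0`, `u < v` and `D(x,v) ≠ 0` on `(u,v)`, then
`B(u,v)` is a positive real number. -/
theorem stmt5 (S : JacobiSetup) (u v : ℝ) (huv : u < v)
    (hD : nevD S (u : ℂ) (v : ℂ) = 0)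
    (hne : ∀ x : ℝ, u < x → x < v → nevD S (x : ℂ) (v : ℂ) ≠ 0) :
    ∃ r : ℝ, 0 < r ∧ nevB S (u : ℂ) (v : ℂ) = (r : ℂ) := by
  have hDuv : S.D u v = 0 := by exact_mod_cast (S.nevD_ofReal u v).symm.trans hD
  have hne' : ∀ x ∈ Set.Ioo u v, S.D x v ≠ 0 := fun x hx h =>
    hne x hx.1 hx.2 (by rw [S.nevD_ofReal, h, Complex.ofReal_zero])
  obtain ⟨y, hpos, hy⟩ := ((S.eventually_tsum_P_mul_pos u).filter_mono nhdsWithin_le_nhds |>.and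
    (Ioo_mem_nhdsGT_of_mem ⟨le_rfl, huv⟩)).exists
  have hDuy : S.D u y < 0 := by
    rw [JacobiSetup.D, tsum_congr fun k => mul_comm (S.P k u) (S.P k y)]
    exact mul_neg_of_neg_of_pos (sub_neg.2 hy.1) hpos
  have hDyv : S.D y v < 0 := S.D_neg_of_mem_Ioo hne' hy
  have hBD : S.B u v * S.D y v = S.D u y := by
    simpa [hDuv] using S.B_mul_D_sub_B_mul_D u y v
  exact ⟨S.B u v, by nlinarith, S.nevB_ofReal u v⟩
end
end
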